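/- arXiv:1604.02216 — 3 statements merged into one kernel-verified Lean document; each statement's English description precedes it below -/
import Mathlib

section
/- Let X ⊆ ℝⁿ be nonempty, let f, g_1, …, g_m : ℝⁿ → ℝ, and suppose there exists x̂ ∈ X with g_j(x̂) < 0 for all j ∈ {1,…,m}. Let λ ∈ ℝ^m with λ_k ≥ 0 for all k, and let c ∈ ℝ be such that c ≤ f(x) + Σ_{k=1}^m λ_k g_k(x) for all x ∈ X (i.e. c is a lower bound for the Lagrangian dual value q(λ) = inf_{x∈X}{f(x) + λᵀg(x)}). Then ‖λ‖ ≤ (f(x̂) − c) / min_{1 ≤ j ≤ m}(−g_j(x̂)), where ‖·‖ is the Euclidean norm on ℝ^m. -/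
/-- Bound on Lagrange multipliers under the Slater condition (Lemma 1 of
Nedić–Ozdaglar): if `x̂ ∈ X` satisfies `g_j(x̂) < 0` for all `j`, `λ ≥ 0`
componentwise, and `c` is a lower bound of the Lagrangian `f(x) + λᵀg(x)` over
`X`, then `‖λ‖ ≤ (f(x̂) − c) / min_j (−g_j(x̂))`. -/
theorem lagrange_multiplier_bound {n m : ℕ} (hm : 0 < m)
    (X : Set (EuclideanSpace ℝ (Fin n))) (hX : X.Nonempty)
    (f : EuclideanSpace ℝ (Fin n) → ℝ)
    (g : Fin m → EuclideanSpace ℝ (Fin n) → ℝ)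
    (xhat : EuclideanSpace ℝ (Fin n)) (hxhat : xhat ∈ X)
    (hgneg : ∀ j, g j xhat < 0)
    (lam : EuclideanSpace ℝ (Fin m)) (hlam : ∀ k, 0 ≤ lam k)
    (c : ℝ) (hc : ∀ x ∈ X, c ≤ f x + ∑ k, lam k * g k x) :
    ‖lam‖ ≤ (f xhat - c) /
      (Finset.univ.inf' (Finset.univ_nonempty_iff.mpr ⟨⟨0, hm⟩⟩)
        fun j => -(g j xhat)) := by
  set γ := Finset.univ.inf' (Finset.univ_nonempty_iff.mpr ⟨⟨0, hm⟩⟩)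
      (fun j => -(g j xhat)) with hγdef
  have hγpos : 0 < γ := by
    rw [hγdef, Finset.lt_inf'_iff]
    intro j _
    linarith [hgneg j]
  set S := ∑ k, lam k with hS
  have hS0 : 0 ≤ S := Finset.sum_nonneg fun k _ => hlam k
  -- γ * S ≤ f x̂ - c
  have key : γ * S ≤ f xhat - c := by
    have h1 : ∑ k, γ * lam k ≤ ∑ k, lam k * (-(g k xhat)) := by
      apply Finset.sum_le_sum
      intro k _
      have hγk : γ ≤ -(g k xhat) := Finset.inf'_le _ (Finset.mem_univ k)
      calc γ * lam k = lam k * γ := mul_comm _ _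
        _ ≤ lam k * (-(g k xhat)) := mul_le_mul_of_nonneg_left hγk (hlam k)
    have h2 : c ≤ f xhat + ∑ k, lam k * g k xhat := hc xhat hxhat
    have h3 : ∑ k, lam k * (-(g k xhat)) = -(∑ k, lam k * g k xhat) := by
      rw [← Finset.sum_neg_distrib]
      simp [mul_neg]
    have h4 : γ * S = ∑ k, γ * lam k := by rw [hS, Finset.mul_sum]
    linarith
  -- ‖lam‖ ≤ S
  have hnorm : ‖lam‖ ≤ S := by
    rw [EuclideanSpace.norm_eq]
    have : Real.sqrt (∑ k, ‖lam k‖ ^ 2) ≤ Real.sqrt (S ^ 2) := by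
      apply Real.sqrt_le_sqrt
      calc ∑ k, ‖lam k‖ ^ 2 = ∑ k, lam k * lam k := by
            apply Finset.sum_congr rfl
            intro k _
            rw [Real.norm_of_nonneg (hlam k)]; ring
        _ ≤ ∑ k, lam k * S := by
            apply Finset.sum_le_sum
            intro k _
            exact mul_le_mul_of_nonneg_left (Finset.single_le_sum
              (fun i _ => hlam i) (Finset.mem_univ k)) (hlam k)
        _ = S ^ 2 := by rw [← Finset.sum_mul]; ring
    rwa [Real.sqrt_sq hS0] at this
  rw [le_div_iff₀ hγpos]
  calc ‖lam‖ * γ ≤ S * γ := mul_le_mul_of_nonneg_right hnorm hγpos.le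
    _ = γ * S := mul_comm _ _
    _ ≤ f xhat - c := key
end

section
/- Let X ⊆ ℝⁿ be nonempty and let f, g_1, …, g_m : ℝⁿ → ℝ. Suppose |f(x)| ≤ F for all x ∈ X, suppose there exists x̂ ∈ X with g_k(x̂) < 0 for all k ∈ {1,…,m}, and suppose λ* ∈ ℝ^m with λ*_k ≥ 0 for all k and v ∈ ℝ satisfy: v = inf_{x∈X}( f(x) + Σ_k λ*_k g_k(x) ) and v ≥ inf_{x∈X} f(x) (both infima being attained or finite). Then ‖λ*‖ ≤ 2F / min_{1 ≤ k ≤ m}(−g_k(x̂)), where ‖·‖ is the Euclidean norm on ℝ^m. -/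
/-- Bound on a strong-duality Lagrange multiplier via a uniform bound on `f`:
if `|f(x)| ≤ F` on `X`, `x̂ ∈ X` satisfies `g_k(x̂) < 0` for all `k`, `λ* ≥ 0`
componentwise, `v = inf_{x∈X}(f(x) + Σ_k λ*_k g_k(x))` (stated as an `IsGLB`),
and `v ≥ inf_{x∈X} f(x)`, then `‖λ*‖ ≤ 2F / min_k (−g_k(x̂))`. -/
theorem lagrange_multiplier_bound_of_bounded_objective {n m : ℕ} (hm : 0 < m)
    (X : Set (EuclideanSpace ℝ (Fin n))) (hX : X.Nonempty)
    (f : EuclideanSpace ℝ (Fin n) → ℝ)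
    (g : Fin m → EuclideanSpace ℝ (Fin n) → ℝ)
    (F : ℝ) (hF : ∀ x ∈ X, |f x| ≤ F)
    (xhat : EuclideanSpace ℝ (Fin n)) (hxhat : xhat ∈ X)
    (hgneg : ∀ k, g k xhat < 0)
    (lam : EuclideanSpace ℝ (Fin m)) (hlam : ∀ k, 0 ≤ lam k)
    (v : ℝ)
    (hv : IsGLB ((fun x => f x + ∑ k, lam k * g k x) '' X) v)
    (hvf : sInf (f '' X) ≤ v) :
    ‖lam‖ ≤ 2 * F /
      (Finset.univ.inf' (Finset.univ_nonempty_iff.mpr ⟨⟨0, hm⟩⟩)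
        fun k => -(g k xhat)) := by
  set c := Finset.univ.inf' (Finset.univ_nonempty_iff.mpr ⟨⟨0, hm⟩⟩)
      (fun k => -(g k xhat)) with hcdef
  have hc : 0 < c := by
    rw [hcdef, Finset.lt_inf'_iff]
    exact fun k _ => neg_pos.mpr (hgneg k)
  have hck : ∀ k, c ≤ -(g k xhat) := fun k =>
    Finset.inf'_le _ (Finset.mem_univ k)
  set S := ∑ k, lam k with hSdef
  have hS0 : 0 ≤ S := Finset.sum_nonneg fun k _ => hlam k
  -- v ≤ f x̂ + Σ λ g x̂
  have h1 : v ≤ f xhat + ∑ k, lam k * g k xhat :=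
    hv.1 ⟨xhat, hxhat, rfl⟩
  -- -F ≤ v
  have h2 : -F ≤ v := by
    refine le_trans ?_ hvf
    refine le_csInf (hX.image f) ?_
    rintro b ⟨x, hx, rfl⟩
    exact neg_le_of_abs_le (hF x hx)
  -- Σ λ g ≤ -c * S
  have h3 : ∑ k, lam k * g k xhat ≤ -c * S := by
    rw [hSdef, Finset.mul_sum]
    refine Finset.sum_le_sum fun k _ => ?_
    calc lam k * g k xhat ≤ lam k * (-c) :=
          mul_le_mul_of_nonneg_left (by linarith [hck k]) (hlam k)
      _ = -c * lam k := mul_comm _ _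
  have hFx : |f xhat| ≤ F := hF xhat hxhat
  have hcS : c * S ≤ 2 * F := by
    have := abs_le.mp hFx
    nlinarith
  have hS2F : S ≤ 2 * F / c := (le_div_iff₀ hc).mpr (by linarith [hcS, mul_comm c S])
  -- ‖lam‖ ≤ S
  have hnorm : ‖lam‖ ≤ S := by
    rw [EuclideanSpace.norm_eq]
    have hsq : ∑ k, ‖lam k‖ ^ 2 ≤ S ^ 2 := by
      rw [hSdef]
      have : ∀ k, ‖lam k‖ ^ 2 = lam k ^ 2 := fun k => by
        rw [Real.norm_eq_abs, sq_abs]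
      simp_rw [this]
      exact Finset.sum_sq_le_sq_sum_of_nonneg fun k _ => hlam k
    calc Real.sqrt (∑ k, ‖lam k‖ ^ 2) ≤ Real.sqrt (S ^ 2) := Real.sqrt_le_sqrt hsq
      _ = S := Real.sqrt_sq hS0
  linarith
end

section
/- Let X ⊆ ℝⁿ be a convex set and suppose each g_k : ℝⁿ → ℝ (k = 1,…,m) is convex on X. Under the virtual-queue update rule, for every t ≥ 1 and every k ∈ {1,…,m}, the running average x̄(t) = (1/t) Σ_{τ=0}^{t−1} x(τ) satisfies g_k(x̄(t)) ≤ Q_k(t)/t. -/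
/-- Constraint value of the running average bounded by the virtual queue.
Indexing convention: `x 0` denotes `x(−1)` and `x (τ+1)` denotes the iterate
`x(τ)`, so `Q 0 k = max {0, −g_k(x(−1))}` and
`Q (t+1) k = max {−g_k(x(t)), Q t k + g_k(x(t))}`.  If `X` is convex and each
`g_k` is convex on `X`, then for every `t ≥ 1` and every `k`, the running
average `x̄(t) = (1/t) Σ_{τ=0}^{t−1} x(τ)` satisfies `g_k(x̄(t)) ≤ Q_k(t)/t`. -/
theorem running_average_constraint_le_queue {n m : ℕ}
    (X : Set (EuclideanSpace ℝ (Fin n))) (hX : Convex ℝ X)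
    (g : Fin m → EuclideanSpace ℝ (Fin n) → ℝ)
    (hg : ∀ k, ConvexOn ℝ X (g k))
    (x : ℕ → EuclideanSpace ℝ (Fin n)) (hx : ∀ t, x t ∈ X)
    (Q : ℕ → EuclideanSpace ℝ (Fin m))
    (hQ0 : ∀ k, Q 0 k = max 0 (-(g k (x 0))))
    (hQr : ∀ (t : ℕ) (k : Fin m),
      Q (t + 1) k = max (-(g k (x (t + 1)))) (Q t k + g k (x (t + 1)))) :
    ∀ t : ℕ, 1 ≤ t → ∀ k : Fin m,
      g k ((t : ℝ)⁻¹ • ∑ τ ∈ Finset.range t, x (τ + 1)) ≤ Q t k / t := by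
  have key : ∀ t : ℕ, ∀ k : Fin m,
      ∑ τ ∈ Finset.range t, g k (x (τ + 1)) ≤ Q t k := by
    intro t k
    induction t with
    | zero => simp [hQ0 k]
    | succ t ih =>
      rw [Finset.sum_range_succ, hQr t k]
      exact le_max_of_le_right (by linarith)
  intro t ht k
  have htpos : (0 : ℝ) < t := by exact_mod_cast ht
  have jensen : g k ((t : ℝ)⁻¹ • ∑ τ ∈ Finset.range t, x (τ + 1)) ≤
      ∑ τ ∈ Finset.range t, (t : ℝ)⁻¹ * g k (x (τ + 1)) := by
    have := (hg k).map_sum_le (t := Finset.range t) (w := fun _ => (t : ℝ)⁻¹)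
      (p := fun τ => x (τ + 1)) (fun _ _ => by positivity)
      (by simp [Finset.sum_const]; field_simp) (fun i _ => hx (i + 1))
    simpa [Finset.smul_sum] using this
  calc g k ((t : ℝ)⁻¹ • ∑ τ ∈ Finset.range t, x (τ + 1))
      ≤ ∑ τ ∈ Finset.range t, (t : ℝ)⁻¹ * g k (x (τ + 1)) := jensen
    _ = (t : ℝ)⁻¹ * ∑ τ ∈ Finset.range t, g k (x (τ + 1)) := by
        rw [Finset.mul_sum]
    _ ≤ Q t k / t := by
        rw [div_eq_inv_mul]
        exact mul_le_mul_of_nonneg_left (key t k) (by positivity)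
end
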